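/- arXiv:2503.16846 — 2 statements merged into one kernel-verified Lean document; each statement's English description precedes it below -/
import Mathlib

section
/- Let F(U) = (1/2)‖W − U Uᵀ‖_F² with W ∈ R^{m×m} symmetric, and let ψ(U) = (3/2)‖U‖_F⁴ + ‖W‖_F ‖U‖_F². Then for any L ≥ 1 and all U, Z ∈ R^{m×r}, ⟨Z, (L∇²ψ(U) − ∇²F(U))Z⟩ ≥ 0, i.e., L∇²ψ(U) − ∇²F(U) is positive semidefinite as a quadratic form. -/
/-!
Each of the three cubic terms of `⟨Z, ∇²F(U) Z⟩` is a Frobenius inner product `⟨Z, A B C⟩` whose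
factors are `Z`, `U`, `Uᵀ` in some order, so by Cauchy–Schwarz and submultiplicativity of the
Frobenius norm it is at most `‖U‖² ‖Z‖²`; likewise `-⟨Z, W Z⟩ ≤ ‖W‖ ‖Z‖²`. Hence
`⟨Z, ∇²F(U) Z⟩ ≤ 6 ‖U‖² ‖Z‖² + 2 ‖W‖ ‖Z‖²`, which is at most `⟨Z, ∇²ψ(U) Z⟩` and thus at most
`L ⟨Z, ∇²ψ(U) Z⟩` for `L ≥ 1`.
-/

open Matrix

noncomputable def finner {m r : ℕ} (A B : Matrix (Fin m) (Fin r) ℝ) : ℝ :=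
  Matrix.trace (Aᵀ * B)

noncomputable def fnorm {m r : ℕ} (A : Matrix (Fin m) (Fin r) ℝ) : ℝ :=
  Real.sqrt (finner A A)

open scoped Matrix.Norms.Frobenius

variable {m r : ℕ}

/-- The Frobenius norm is by definition the norm of this nested `PiLp 2`. -/
theorem finner_eq_inner (A B : Matrix (Fin m) (Fin r) ℝ) :
    finner A B = inner ℝ (WithLp.toLp 2 fun i => WithLp.toLp 2 (A i))
      (WithLp.toLp 2 fun i => WithLp.toLp 2 (B i)) := by
  simp [finner, trace, mul_apply, PiLp.inner_apply, Finset.sum_comm (γ := Fin r), mul_comm]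

theorem abs_finner_le (A B : Matrix (Fin m) (Fin r) ℝ) : |finner A B| ≤ ‖A‖ * ‖B‖ := by
  rw [finner_eq_inner]
  exact abs_real_inner_le_norm _ _

theorem finner_self_eq_norm_sq (A : Matrix (Fin m) (Fin r) ℝ) : finner A A = ‖A‖ ^ 2 := by
  rw [finner_eq_inner, real_inner_self_eq_norm_sq]
  rfl

theorem fnorm_eq_norm (A : Matrix (Fin m) (Fin r) ℝ) : fnorm A = ‖A‖ := by
  rw [fnorm, finner_self_eq_norm_sq, Real.sqrt_sq (norm_nonneg A)]

theorem finner_mul_mul_le {k l : ℕ} (Z : Matrix (Fin m) (Fin r) ℝ) (A : Matrix (Fin m) (Fin k) ℝ)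
    (B : Matrix (Fin k) (Fin l) ℝ) (C : Matrix (Fin l) (Fin r) ℝ) :
    finner Z (A * B * C) ≤ ‖Z‖ * (‖A‖ * ‖B‖ * ‖C‖) := by
  calc finner Z (A * B * C) ≤ ‖Z‖ * ‖A * B * C‖ := (le_abs_self _).trans (abs_finner_le _ _)
    _ ≤ ‖Z‖ * (‖A‖ * ‖B‖ * ‖C‖) := by
      gcongr
      exact (frobenius_norm_mul _ _).trans
        (mul_le_mul_of_nonneg_right (frobenius_norm_mul _ _) (norm_nonneg _))

theorem neg_finner_mul_le (Z : Matrix (Fin m) (Fin r) ℝ) (W : Matrix (Fin m) (Fin m) ℝ) :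
    -finner Z (W * Z) ≤ ‖W‖ * ‖Z‖ ^ 2 := by
  calc -finner Z (W * Z) ≤ ‖Z‖ * ‖W * Z‖ := (neg_le_abs _).trans (abs_finner_le _ _)
    _ ≤ ‖Z‖ * (‖W‖ * ‖Z‖) := by gcongr; exact frobenius_norm_mul _ _
    _ = ‖W‖ * ‖Z‖ ^ 2 := by ring

theorem stmt5_general (m r : ℕ) (W : Matrix (Fin m) (Fin m) ℝ)
    (L : ℝ) (hL : 1 ≤ L) (U Z : Matrix (Fin m) (Fin r) ℝ) :
    0 ≤ L * (6 * finner U U * finner Z Z + 12 * (finner U Z) ^ 2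
              + 2 * fnorm W * finner Z Z)
        - finner Z ((2:ℝ) • (Z * Uᵀ * U + U * Zᵀ * U + U * Uᵀ * Z - W * Z)) := by
  have hexpand : finner Z ((2:ℝ) • (Z * Uᵀ * U + U * Zᵀ * U + U * Uᵀ * Z - W * Z)) =
      2 * (finner Z (Z * Uᵀ * U) + finner Z (U * Zᵀ * U) + finner Z (U * Uᵀ * Z)
        - finner Z (W * Z)) := by
    simp only [finner, Matrix.mul_smul, Matrix.mul_add, Matrix.mul_sub, trace_smul, trace_add,
      trace_sub, smul_eq_mul]
  have h₁ := finner_mul_mul_le Z Z Uᵀ U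
  have h₂ := finner_mul_mul_le Z U Zᵀ U
  have h₃ := finner_mul_mul_le Z U Uᵀ Z
  have h₄ := neg_finner_mul_le Z W
  rw [frobenius_norm_transpose] at h₁ h₂ h₃
  have hHessψ : 6 * ‖U‖ ^ 2 * ‖Z‖ ^ 2 + 2 * ‖W‖ * ‖Z‖ ^ 2 ≤
      6 * finner U U * finner Z Z + 12 * (finner U Z) ^ 2 + 2 * fnorm W * finner Z Z := by
    rw [finner_self_eq_norm_sq, finner_self_eq_norm_sq, fnorm_eq_norm]
    nlinarith [sq_nonneg (finner U Z)]
  have hψ_nonneg : 0 ≤ 6 * ‖U‖ ^ 2 * ‖Z‖ ^ 2 + 2 * ‖W‖ * ‖Z‖ ^ 2 := by positivity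
  rw [hexpand]
  nlinarith

theorem stmt5 (m r : ℕ) (W : Matrix (Fin m) (Fin m) ℝ) (hW : Wᵀ = W)
    (L : ℝ) (hL : 1 ≤ L) (U Z : Matrix (Fin m) (Fin r) ℝ) :
    0 ≤ L * (6 * finner U U * finner Z Z + 12 * (finner U Z) ^ 2
              + 2 * fnorm W * finner Z Z)
        - finner Z ((2:ℝ) • (Z * Uᵀ * U + U * Zᵀ * U + U * Uᵀ * Z - W * Z)) :=
  stmt5_general m r W L hL U Z
end

section
/- Let f, ψ: R^n → R be twice continuously differentiable with ψ convex, and suppose that for all x the matrix L∇²ψ(x) − ∇²f(x) and L∇²ψ(x) + ∇²f(x) are both positive semidefinite. Then for all x, y: |f(x) − f(y) − ⟨∇f(y), x−y⟩| ≤ L D_ψ(x,y), where D_ψ(x,y) = ψ(x) − ψ(y) − ⟨∇ψ(y), x−y⟩ is the Bregman distance. -/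
open RealInnerProductSpace

noncomputable def hessQF {n : ℕ}
    (f : EuclideanSpace ℝ (Fin n) → ℝ) (x v : EuclideanSpace ℝ (Fin n)) : ℝ :=
  (fderiv ℝ (fderiv ℝ f) x v) v

/-! A function whose second directional derivatives are all nonnegative lies above its tangent
planes: along a segment its directional derivative is monotone, so the mean value theorem applies.
Both `L ψ - f` and `L ψ + f` are such functions, which traps the Bregman remainder of `f` between
`-L D_ψ` and `L D_ψ`. -/

section

variable {E : Type*} [NormedAddCommGroup E] [NormedSpace ℝ E]

theorem add_fderiv_le_of_second_deriv_nonneg {g : E → ℝ} {g' : E → E →L[ℝ] ℝ}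
    {g'' : E → E →L[ℝ] E →L[ℝ] ℝ} (hg : ∀ z, HasFDerivAt g (g' z) z)
    (hg' : ∀ z, HasFDerivAt g' (g'' z) z) (hg'' : ∀ z v, 0 ≤ g'' z v v) (x y : E) :
    g y + g' y (x - y) ≤ g x := by
  set u := x - y
  have hline (t : ℝ) : HasDerivAt (fun t : ℝ => y + t • u) u t := by
    simpa using ((hasDerivAt_id t).smul_const u).const_add y
  have hφ (t : ℝ) : HasDerivAt (fun t => g (y + t • u)) (g' (y + t • u) u) t :=
    (hg _).comp_hasDerivAt t (hline t)
  have hφ' (t : ℝ) : HasDerivAt (fun t => g' (y + t • u) u) (g'' (y + t • u) u u) t := by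
    simpa using ((hg' _).comp_hasDerivAt t (hline t)).clm_apply (hasDerivAt_const t u)
  have hmono : Monotone fun t => g' (y + t • u) u :=
    monotone_of_hasDerivAt_nonneg hφ' fun t => hg'' _ _
  obtain ⟨c, hc, hslope⟩ := exists_hasDerivAt_eq_slope (fun t => g (y + t • u)) _ zero_lt_one
    (fun t _ => (hφ t).continuousAt.continuousWithinAt) fun t _ => hφ t
  have hc0 := hmono hc.1.le
  simp only [zero_smul, add_zero, one_smul, sub_zero, div_one, u, add_sub_cancel] at hslope hc0
  linarith

theorem bregman_combination_nonneg {f ψ : E → ℝ} (hf : Differentiable ℝ f)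
    (hf' : Differentiable ℝ (fderiv ℝ f)) (hψ : Differentiable ℝ ψ)
    (hψ' : Differentiable ℝ (fderiv ℝ ψ)) (a b : ℝ)
    (h : ∀ z v, 0 ≤ a * fderiv ℝ (fderiv ℝ ψ) z v v + b * fderiv ℝ (fderiv ℝ f) z v v)
    (x y : E) :
    0 ≤ a * (ψ x - ψ y - fderiv ℝ ψ y (x - y)) + b * (f x - f y - fderiv ℝ f y (x - y)) := by
  have := add_fderiv_le_of_second_deriv_nonneg (g := fun z => a * ψ z + b * f z)
    (fun z => ((hψ z).hasFDerivAt.const_mul a).add ((hf z).hasFDerivAt.const_mul b))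
    (fun z => ((hψ' z).hasFDerivAt.const_smul a).add ((hf' z).hasFDerivAt.const_smul b))
    (by simpa using h) x y
  simp only [add_apply, FunLike.coe_smul, Pi.smul_apply, smul_eq_mul] at this
  linarith

end

theorem stmt6_general (n : ℕ) (f ψ : EuclideanSpace ℝ (Fin n) → ℝ) (L : ℝ)
    (hf : ContDiff ℝ 2 f) (hψ : ContDiff ℝ 2 ψ)
    (hpsd₁ : ∀ x v, 0 ≤ L * hessQF ψ x v - hessQF f x v)
    (hpsd₂ : ∀ x v, 0 ≤ L * hessQF ψ x v + hessQF f x v) :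
    ∀ x y : EuclideanSpace ℝ (Fin n),
      |f x - f y - ⟪gradient f y, x - y⟫| ≤
        L * (ψ x - ψ y - ⟪gradient ψ y, x - y⟫) := by
  intro x y
  have hf' := (hf.fderiv_right one_add_one_eq_two.le).differentiable one_ne_zero
  have hψ' := (hψ.fderiv_right one_add_one_eq_two.le).differentiable one_ne_zero
  have hlower := bregman_combination_nonneg (hf.differentiable two_ne_zero) hf'
    (hψ.differentiable two_ne_zero) hψ' L (-1)
    (fun z v => by simpa [hessQF, sub_eq_add_neg] using hpsd₁ z v) x y
  have hupper := bregman_combination_nonneg (hf.differentiable two_ne_zero) hf'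
    (hψ.differentiable two_ne_zero) hψ' L 1
    (fun z v => by simpa [hessQF] using hpsd₂ z v) x y
  simp only [gradient, InnerProductSpace.toDual_symm_apply]
  rw [abs_le]
  constructor <;> linarith

theorem stmt6 (n : ℕ) (f ψ : EuclideanSpace ℝ (Fin n) → ℝ) (L : ℝ) (hL : 0 < L)
    (hf : ContDiff ℝ 2 f) (hψ : ContDiff ℝ 2 ψ)
    (hconv : ConvexOn ℝ Set.univ ψ)
    (hpsd₁ : ∀ x v, 0 ≤ L * hessQF ψ x v - hessQF f x v)
    (hpsd₂ : ∀ x v, 0 ≤ L * hessQF ψ x v + hessQF f x v) :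
    ∀ x y : EuclideanSpace ℝ (Fin n),
      |f x - f y - ⟪gradient f y, x - y⟫| ≤
        L * (ψ x - ψ y - ⟪gradient ψ y, x - y⟫) :=
  stmt6_general n f ψ L hf hψ hpsd₁ hpsd₂
end
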